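/- Suppose β > 1 and h > 0, and let m₀ ∈ (0,1) be the largest solution in (−1,1) of the Curie-Weiss equation m = tanh(β(m+h)). Then there exist ι₀ > 0 and M₁, M₂ ∈ [0,1] with 0 ≤ M₁ < m₀ and m₀ < M₂ ≤ 1 such that: (i) for every m with M₁ ≤ m ≤ m₀, setting m' := m − ι₀(m − m₀), one has βm + βh ≥ ½ log((1+m')/(1−m')); and (ii) for every m with m₀ ≤ m ≤ M₂, setting m' := m − ι₀(m − m₀), one has βm + βh ≤ ½ log((1+m')/(1−m')). -/

import Mathlib

/-!
With `L = artanh`, a root satisfies `L m₀ = β (m₀ + h)`, which forces `β > 0` and so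
`L m₀ ≥ β m₀`, while the mean value theorem and the monotonicity of `L' x = 1 / (1 - x²)` on
`[0, 1)` give `L m₀ < m₀ L' m₀`. Hence `β < L' m₀`: the root is stable. Choosing `ι₀ > 0` with
`β < (1 - ι₀) L' m₀`, the function `m ↦ β m + β h - L (m - ι₀ (m - m₀))` vanishes at `m₀` with
negative derivative there, so it is nonnegative just left of `m₀` and nonpositive just right of it.
-/

/-- `m₀` is the largest solution in `(-1,1)` of the Curie-Weiss equation
`m = tanh(β(m+h))`, and it lies in `(0,1)`. -/
def IsLargestCWRoot (β h m₀ : ℝ) : Prop :=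
  m₀ ∈ Set.Ioo (0 : ℝ) 1 ∧ m₀ = Real.tanh (β * (m₀ + h)) ∧
    ∀ m ∈ Set.Ioo (-1 : ℝ) 1, m = Real.tanh (β * (m + h)) → m ≤ m₀

open Real Set Filter Topology

namespace Real

theorem hasDerivAt_artanh {x : ℝ} (hx : x ∈ Ioo (-1) 1) :
    HasDerivAt artanh (1 / (1 - x ^ 2)) x := by
  obtain ⟨hx₁, hx₂⟩ := hx
  have hlog : HasDerivAt (fun y => 1 / 2 * (log (1 + y) - log (1 - y)))
      (1 / 2 * (1 / (1 + x) - (-1) / (1 - x))) x := by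
    have hplus := ((hasDerivAt_id' x).const_add 1).log (by linarith)
    have hminus := ((hasDerivAt_id' x).const_sub 1).log (by linarith)
    simpa using (hplus.sub hminus).const_mul (1 / 2 : ℝ)
  have heq : artanh =ᶠ[𝓝 x] fun y => 1 / 2 * (log (1 + y) - log (1 - y)) := by
    filter_upwards [Ioo_mem_nhds hx₁ hx₂] with y hy
    rw [artanh_eq_half_log (Ioo_subset_Icc_self hy),
      log_div (by linarith [hy.1]) (by linarith [hy.2])]
  refine (hlog.congr_of_eventuallyEq heq).congr_deriv ?_
  have h1 : 1 + x ≠ 0 := by linarith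
  have h2 : 1 - x ≠ 0 := by linarith
  rw [show 1 - x ^ 2 = (1 + x) * (1 - x) by ring]
  field_simp
  ring

theorem artanh_lt_div_one_sub_sq {x : ℝ} (hx : x ∈ Ioo 0 1) :
    artanh x < x / (1 - x ^ 2) := by
  obtain ⟨hx₀, hx₁⟩ := hx
  have hderiv : ∀ y ∈ Icc 0 x, HasDerivAt artanh (1 / (1 - y ^ 2)) y := fun y hy =>
    hasDerivAt_artanh ⟨by linarith [hy.1], by linarith [hy.2]⟩
  obtain ⟨ξ, hξ, hslope⟩ := exists_hasDerivAt_eq_slope artanh (fun y => 1 / (1 - y ^ 2)) hx₀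
    (fun y hy => (hderiv y hy).continuousAt.continuousWithinAt)
    (fun y hy => hderiv y (Ioo_subset_Icc_self hy))
  rw [artanh_zero, sub_zero, sub_zero, eq_div_iff hx₀.ne'] at hslope
  have hξx : ξ ^ 2 < x ^ 2 := by nlinarith [hξ.1, hξ.2]
  calc artanh x = x / (1 - ξ ^ 2) := by rw [← hslope]; ring
    _ < x / (1 - x ^ 2) := by
      gcongr
      nlinarith

end Real

theorem HasDerivAt.exists_ge_left_le_right_of_neg {f : ℝ → ℝ} {f' x₀ : ℝ}
    (hf : HasDerivAt f f' x₀) (hf' : f' < 0) :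
    ∃ δ > 0, (∀ x ∈ Icc (x₀ - δ) x₀, f x₀ ≤ f x) ∧ ∀ x ∈ Icc x₀ (x₀ + δ), f x ≤ f x₀ := by
  have hslope : ∀ᶠ x in 𝓝[≠] x₀, slope f x₀ x < 0 :=
    (hasDerivAt_iff_tendsto_slope.1 hf).eventually (gt_mem_nhds hf')
  obtain ⟨ε, hε, hball⟩ := Metric.eventually_nhds_iff.1 (eventually_nhdsWithin_iff.1 hslope)
  have hneg : ∀ x, |x - x₀| ≤ ε / 2 → x ≠ x₀ → (f x - f x₀) / (x - x₀) < 0 := fun x hx hne => by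
    simpa [slope_def_field] using
      hball (by rw [Real.dist_eq]; linarith) hne
  refine ⟨ε / 2, half_pos hε, fun x hx => ?_, fun x hx => ?_⟩
  · rcases hx.2.eq_or_lt with rfl | hlt
    · rfl
    · have := hneg x (by rw [abs_le]; constructor <;> linarith [hx.1]) hlt.ne
      rcases div_neg_iff.1 this with ⟨_, h⟩ | ⟨h, _⟩ <;> linarith
  · rcases hx.1.eq_or_lt with rfl | hlt
    · rfl
    · have := hneg x (by rw [abs_le]; constructor <;> linarith [hx.2]) hlt.ne'
      rcases div_neg_iff.1 this with ⟨_, h⟩ | ⟨h, _⟩ <;> linarith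

theorem hasDerivAt_curieWeiss_gap (β h ι : ℝ) {m₀ : ℝ} (hm₀ : m₀ ∈ Ioo (-1) 1) :
    HasDerivAt (fun m => β * m + β * h - artanh (m - ι * (m - m₀)))
      (β - (1 - ι) / (1 - m₀ ^ 2)) m₀ := by
  have hinner : HasDerivAt (fun m => m - ι * (m - m₀)) (1 - ι) m₀ :=
    ((hasDerivAt_id' m₀).sub (((hasDerivAt_id' m₀).sub_const m₀).const_mul ι)).congr_deriv
      (by ring)
  have hlin : HasDerivAt (fun m => β * m + β * h) β m₀ :=
    ((hasDerivAt_id' m₀).const_mul β).add_const _ |>.congr_deriv (mul_one β)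
  exact (hlin.sub ((hasDerivAt_artanh hm₀).comp_of_eq m₀ hinner (by ring))).congr_deriv
    (by ring)

theorem curieWeiss_root_stable {β h m₀ : ℝ} (hh : 0 ≤ h) (hm₀ : m₀ ∈ Ioo 0 1)
    (hroot : artanh m₀ = β * (m₀ + h)) : 0 < β ∧ β * (1 - m₀ ^ 2) < 1 := by
  have hβ : 0 < β := pos_of_mul_pos_left (hroot ▸ artanh_pos hm₀) (by linarith [hm₀.1])
  have hsq : 0 < 1 - m₀ ^ 2 := by nlinarith [hm₀.1, hm₀.2]
  have hlt := artanh_lt_div_one_sub_sq hm₀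
  rw [hroot, lt_div_iff₀ hsq] at hlt
  exact ⟨hβ, by nlinarith [hm₀.1, mul_nonneg hβ.le hh]⟩

theorem curieWeiss_two_sided_bounds_general (β h m₀ : ℝ) (hh : 0 < h)
    (hm₀ : IsLargestCWRoot β h m₀) :
    ∃ ι₀ > (0 : ℝ), ∃ M₁ M₂ : ℝ,
      0 ≤ M₁ ∧ M₁ < m₀ ∧ m₀ < M₂ ∧ M₂ ≤ 1 ∧
      (∀ m : ℝ, M₁ ≤ m → m ≤ m₀ →
        β * m + β * h ≥
          (1 / 2) * Real.log ((1 + (m - ι₀ * (m - m₀))) / (1 - (m - ι₀ * (m - m₀))))) ∧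
      (∀ m : ℝ, m₀ ≤ m → m ≤ M₂ →
        β * m + β * h ≤
          (1 / 2) * Real.log ((1 + (m - ι₀ * (m - m₀))) / (1 - (m - ι₀ * (m - m₀))))) := by
  obtain ⟨⟨hm₀0, hm₀1⟩, hroot, -⟩ := hm₀
  have hartanh : artanh m₀ = β * (m₀ + h) := by rw [hroot, artanh_tanh, ← hroot]
  obtain ⟨hβ, hstable⟩ := curieWeiss_root_stable hh.le ⟨hm₀0, hm₀1⟩ hartanh
  have hsq : 0 < 1 - m₀ ^ 2 := by nlinarith
  set ι₀ := (1 - β * (1 - m₀ ^ 2)) / 2 with hι₀_def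
  have hι₀ : ι₀ ∈ Ioo 0 1 := ⟨by linarith, by nlinarith [mul_pos hβ hsq]⟩
  obtain ⟨δ, hδ, hleft, hright⟩ :=
    (hasDerivAt_curieWeiss_gap β h ι₀ ⟨by linarith, hm₀1⟩).exists_ge_left_le_right_of_neg
      (by rw [sub_neg, lt_div_iff₀ hsq]; linarith)
  simp only [sub_self, mul_zero, sub_zero, hartanh] at hleft hright
  have hlog : ∀ m ∈ Icc (0 : ℝ) 1, 1 / 2 * log ((1 + (m - ι₀ * (m - m₀))) /
      (1 - (m - ι₀ * (m - m₀)))) = artanh (m - ι₀ * (m - m₀)) := fun m hm =>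
    (artanh_eq_half_log ⟨by nlinarith [mul_nonneg (sub_pos.2 hι₀.2).le hm.1, hι₀.1],
      by nlinarith [mul_nonneg (sub_pos.2 hι₀.2).le (sub_nonneg.2 hm.2), hι₀.1]⟩).symm
  refine ⟨ι₀, hι₀.1, max 0 (m₀ - δ), min 1 (m₀ + δ), le_max_left _ _,
    max_lt hm₀0 (by linarith), lt_min hm₀1 (by linarith), min_le_left _ _, ?_, ?_⟩
  · intro m hm hmm₀
    rw [hlog m ⟨le_of_max_le_left hm, by linarith⟩]
    linarith [hleft m ⟨le_of_max_le_right hm, hmm₀⟩]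
  · intro m hmm₀ hm
    rw [hlog m ⟨by linarith, le_of_le_min_left hm⟩]
    linarith [hright m ⟨hmm₀, le_of_le_min_right hm⟩]

/-- for `β > 1`, `h > 0` and `m₀` the largest solution of the
Curie-Weiss equation, there exist `ι₀ > 0` and `M₁, M₂ ∈ [0,1]` with
`0 ≤ M₁ < m₀` and `m₀ < M₂ ≤ 1` such that, with `m' := m - ι₀(m - m₀)`,
`βm + βh ≥ ½ log((1+m')/(1-m'))` for all `M₁ ≤ m ≤ m₀`, and
`βm + βh ≤ ½ log((1+m')/(1-m'))` for all `m₀ ≤ m ≤ M₂`. -/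
theorem curieWeiss_two_sided_bounds (β h m₀ : ℝ) (hβ : 1 < β) (hh : 0 < h)
    (hm₀ : IsLargestCWRoot β h m₀) :
    ∃ ι₀ > (0 : ℝ), ∃ M₁ M₂ : ℝ,
      0 ≤ M₁ ∧ M₁ < m₀ ∧ m₀ < M₂ ∧ M₂ ≤ 1 ∧
      (∀ m : ℝ, M₁ ≤ m → m ≤ m₀ →
        β * m + β * h ≥
          (1 / 2) * Real.log ((1 + (m - ι₀ * (m - m₀))) / (1 - (m - ι₀ * (m - m₀))))) ∧
      (∀ m : ℝ, m₀ ≤ m → m ≤ M₂ →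
        β * m + β * h ≤
          (1 / 2) * Real.log ((1 + (m - ι₀ * (m - m₀))) / (1 - (m - ι₀ * (m - m₀))))) :=
  curieWeiss_two_sided_bounds_general β h m₀ hh hm₀
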